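/- For every d > 0 and every α ∈ ℝ, the equation F_d^N(λ) = α has exactly one solution λ in the interval (-∞, (π/d)²); note that (-∞, (π/d)²) is disjoint from Π_d^N, so F_d^N is defined on all of this interval. -/
import Mathlib


/-- The set `Π_d^N = { (π(2k-1)/d)² : k ∈ ℕ, k ≥ 1 }`. -/
noncomputable def PiN (d : ℝ) : Set ℝ :=
  {x | ∃ k : ℕ, 1 ≤ k ∧ x = (Real.pi * (2 * (k : ℝ) - 1) / d) ^ 2}

/-- The function `F_d^N`. -/
noncomputable def FN (d lam : ℝ) : ℝ :=
  if 0 < lam then 2 * Real.sqrt lam * Real.tan (d * Real.sqrt lam / 2)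
  else if lam = 0 then 0
  else -2 * Real.sqrt (-lam) * Real.tanh (d * Real.sqrt (-lam) / 2)

open Real Filter Set

lemma myTanh_lt {x y : ℝ} (h : x < y) : Real.tanh x < Real.tanh y := by
  rw [Real.tanh_eq_sinh_div_cosh, Real.tanh_eq_sinh_div_cosh,
    div_lt_div_iff₀ (Real.cosh_pos x) (Real.cosh_pos y)]
  have h1 : Real.sinh (x - y) < 0 := Real.sinh_neg_iff.2 (by linarith)
  have h2 := Real.sinh_sub x y
  linarith

lemma myTanh_le {x y : ℝ} (h : x ≤ y) : Real.tanh x ≤ Real.tanh y := by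
  rcases eq_or_lt_of_le h with rfl | h
  · exact le_refl _
  · exact (myTanh_lt h).le

lemma myTanh_cont : Continuous Real.tanh := by
  have : Real.tanh = fun x => Real.sinh x / Real.cosh x := by
    funext x; exact Real.tanh_eq_sinh_div_cosh x
  rw [this]
  exact Real.continuous_sinh.div Real.continuous_cosh fun x => (Real.cosh_pos x).ne'

/-- substituted function -/
noncomputable def Gf (d t : ℝ) : ℝ :=
  if 0 < t then 2 * t * Real.tan (d * t / 2) else -2 * t * Real.tanh (d * t / 2)

lemma Gf_zero (d : ℝ) : Gf d 0 = 0 := by simp [Gf]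

lemma Gf_nonpos {d t : ℝ} (hd : 0 < d) (ht : t ≤ 0) : Gf d t ≤ 0 := by
  rw [Gf, if_neg (by linarith)]
  have h1 : Real.tanh (d * t / 2) ≤ 0 := by
    have := myTanh_le (x := d * t / 2) (y := 0) (by nlinarith)
    simpa using this
  nlinarith

lemma Gf_pos {d t : ℝ} (hd : 0 < d) (ht : 0 < t) (ht2 : t < Real.pi / d) :
    0 < Gf d t := by
  rw [Gf, if_pos ht]
  have h1 : 0 < Real.tan (d * t / 2) := by
    apply Real.tan_pos_of_pos_of_lt_pi_div_two (by nlinarith)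
    have : d * t < Real.pi := by
      calc d * t < d * (Real.pi / d) := by nlinarith
      _ = Real.pi := by field_simp
    linarith
  nlinarith

lemma Gf_strictMonoOn {d : ℝ} (hd : 0 < d) :
    StrictMonoOn (Gf d) (Set.Iio (Real.pi / d)) := by
  intro t1 h1 t2 h2 hlt
  simp only [Set.mem_Iio] at h1 h2
  by_cases h2' : 0 < t2
  · have htan2 : 0 < Real.tan (d * t2 / 2) := by
      apply Real.tan_pos_of_pos_of_lt_pi_div_two (by nlinarith)
      have : d * t2 < Real.pi := by
        calc d * t2 < d * (Real.pi / d) := by nlinarith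
        _ = Real.pi := by field_simp
      linarith
    by_cases h1' : 0 < t1
    · rw [Gf, if_pos h1', Gf, if_pos h2']
      have htan : Real.tan (d * t1 / 2) < Real.tan (d * t2 / 2) := by
        apply Real.tan_lt_tan_of_lt_of_lt_pi_div_two (by nlinarith [Real.pi_pos])
        · have : d * t2 < Real.pi := by
            calc d * t2 < d * (Real.pi / d) := by nlinarith
            _ = Real.pi := by field_simp
          linarith
        · nlinarith
      have htan1 : 0 < Real.tan (d * t1 / 2) := by
        apply Real.tan_pos_of_pos_of_lt_pi_div_two (by nlinarith)
        have : d * t1 < Real.pi := by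
          calc d * t1 < d * (Real.pi / d) := by nlinarith
          _ = Real.pi := by field_simp
        linarith
      nlinarith
    · push_neg at h1'
      exact lt_of_le_of_lt (Gf_nonpos hd h1') (Gf_pos hd h2' h2)
  · push_neg at h2'
    have h1'' : t1 < 0 := lt_of_lt_of_le hlt h2'
    rw [Gf, if_neg (by linarith), Gf, if_neg (by linarith)]
    have ha : Real.tanh (d * t1 / 2) < Real.tanh (d * t2 / 2) := myTanh_lt (by nlinarith)
    have hb : Real.tanh (d * t2 / 2) ≤ 0 := by
      have := myTanh_le (x := d * t2 / 2) (y := 0) (by nlinarith)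
      simpa using this
    nlinarith

lemma Gf_exists {d : ℝ} (hd : 0 < d) (α : ℝ) :
    ∃ t, t < Real.pi / d ∧ Gf d t = α := by
  rcases lt_trichotomy α 0 with hα | rfl | hα
  · -- negative case: IVT on [-s, 0] with f t = -2 t tanh (d t / 2)
    set c := Real.tanh (d / 2) with hc
    have hcpos : 0 < c := by
      have := myTanh_lt (x := 0) (y := d / 2) (by linarith)
      simpa using this
    set s : ℝ := max 1 (-α / (2 * c)) with hs
    have hs1 : 1 ≤ s := le_max_left _ _
    have hs2 : -α / (2 * c) ≤ s := le_max_right _ _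
    have hsal : -α ≤ 2 * s * c := by
      rw [div_le_iff₀ (by positivity)] at hs2; linarith
    have hcont : ContinuousOn (fun t => -2 * t * Real.tanh (d * t / 2)) (Set.Icc (-s) 0) :=
      (((continuous_const.mul continuous_id).mul
        (myTanh_cont.comp (by continuity))).continuousOn)
    have hends : (fun t => -2 * t * Real.tanh (d * t / 2)) (-s) ≤ α := by
      simp only
      have h1 : c ≤ Real.tanh (d * s / 2) := myTanh_le (by nlinarith)
      have h2 : Real.tanh (d * -s / 2) = -Real.tanh (d * s / 2) := by
        rw [show d * -s / 2 = -(d * s / 2) by ring, Real.tanh_neg]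
      rw [h2]
      nlinarith
    have h0 : α ≤ (fun t => -2 * t * Real.tanh (d * t / 2)) 0 := by simp; linarith
    have hivt := intermediate_value_Icc (by linarith : (-s : ℝ) ≤ 0) hcont
    obtain ⟨t, ht, htval⟩ := hivt ⟨hends, h0⟩
    have hpd : (0:ℝ) < Real.pi / d := by positivity
    refine ⟨t, by linarith [ht.2], ?_⟩
    rw [Gf, if_neg (by push_neg; exact ht.2)]; exact htval
  · exact ⟨0, by positivity, Gf_zero d⟩
  · -- positive case
    have hpd : 0 < Real.pi / d := by positivity
    have htend : Tendsto (fun t => 2 * t * Real.tan (d * t / 2)) (nhdsWithin (Real.pi / d) (Set.Iio (Real.pi / d))) atTop := by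
      apply Filter.Tendsto.pos_mul_atTop (C := 2 * (Real.pi / d)) (by positivity)
      · exact ((continuous_const.mul continuous_id).tendsto (Real.pi / d)).mono_left
          nhdsWithin_le_nhds
      · have hmap : Tendsto (fun t => d * t / 2) (nhdsWithin (Real.pi / d) (Set.Iio (Real.pi / d)))
            (nhdsWithin (Real.pi / 2) (Set.Iio (Real.pi / 2))) := by
          apply Filter.Tendsto.inf
          · have : Continuous fun t : ℝ => d * t / 2 := by continuity
            have h := this.tendsto (Real.pi / d)
            have he : d * (Real.pi / d) / 2 = Real.pi / 2 := by field_simp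
            rw [he] at h; exact h
          · rw [Filter.tendsto_principal_principal]
            intro t ht
            simp only [Set.mem_Iio] at ht ⊢
            have : d * t < Real.pi := by
              calc d * t < d * (Real.pi / d) := by nlinarith
              _ = Real.pi := by field_simp
            linarith
        exact Real.tendsto_tan_pi_div_two.comp hmap
    have hev : ∀ᶠ t in nhdsWithin (Real.pi / d) (Set.Iio (Real.pi / d)),
        α ≤ 2 * t * Real.tan (d * t / 2) := htend.eventually_ge_atTop α
    have hev2 : ∀ᶠ t in nhdsWithin (Real.pi / d) (Set.Iio (Real.pi / d)), 0 < t :=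
      eventually_nhdsWithin_of_eventually_nhds (eventually_gt_nhds hpd)
    have hev3 : ∀ᶠ t in nhdsWithin (Real.pi / d) (Set.Iio (Real.pi / d)), t < Real.pi / d :=
      eventually_mem_nhdsWithin.mono (fun t ht => ht)
    obtain ⟨b, ⟨hb1, hb2⟩, hb3⟩ := ((hev.and hev2).and hev3).exists
    have hcont : ContinuousOn (fun t => 2 * t * Real.tan (d * t / 2)) (Set.Icc 0 b) := by
      intro x hx
      obtain ⟨hx1, hx2⟩ := hx
      apply ContinuousAt.continuousWithinAt
      apply ContinuousAt.mul ((continuous_const.mul continuous_id).continuousAt)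
      have hconti : ContinuousAt (fun t : ℝ => d * t / 2) x :=
        ((continuous_const.mul continuous_id).div_const 2).continuousAt
      show ContinuousAt (Real.tan ∘ fun t : ℝ => d * t / 2) x
      apply ContinuousAt.comp ?_ hconti
      apply Real.continuousAt_tan.2
      apply ne_of_gt
      apply Real.cos_pos_of_mem_Ioo
      constructor
      · have := Real.pi_pos; show -(Real.pi / 2) < d * x / 2; nlinarith
      · have : d * x < Real.pi := by
          calc d * x ≤ d * b := by nlinarith
          _ < d * (Real.pi / d) := by nlinarith
          _ = Real.pi := by field_simp
        show d * x / 2 < Real.pi / 2; linarith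
    have h0 : (fun t => 2 * t * Real.tan (d * t / 2)) 0 ≤ α := by simp; linarith
    obtain ⟨t, ht, htval⟩ := intermediate_value_Icc hb2.le hcont ⟨h0, hb1⟩
    have htpos : 0 < t := by
      rcases eq_or_lt_of_le ht.1 with rfl | h
      · exfalso; simp at htval; linarith
      · exact h
    exact ⟨t, by linarith [ht.2], by rw [Gf, if_pos htpos]; exact htval⟩

noncomputable def toT (lam : ℝ) : ℝ :=
  if 0 ≤ lam then Real.sqrt lam else -Real.sqrt (-lam)

lemma FN_eq_Gf (d lam : ℝ) : FN d lam = Gf d (toT lam) := by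
  rcases lt_trichotomy lam 0 with h | rfl | h
  · have hs : 0 < Real.sqrt (-lam) := Real.sqrt_pos.2 (by linarith)
    rw [FN, if_neg (by linarith), if_neg (by linarith), toT, if_neg (by linarith),
      Gf, if_neg (by linarith)]
    rw [show d * -Real.sqrt (-lam) / 2 = -(d * Real.sqrt (-lam) / 2) by ring, Real.tanh_neg]
    ring
  · simp [FN, toT, Gf]
  · have hs : 0 < Real.sqrt lam := Real.sqrt_pos.2 h
    rw [FN, if_pos h, toT, if_pos h.le, Gf, if_pos hs]

lemma toT_lt {d lam : ℝ} (hd : 0 < d) (h : lam < (Real.pi / d) ^ 2) :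
    toT lam < Real.pi / d := by
  rw [toT]
  split_ifs with h0
  · exact (Real.sqrt_lt' (by positivity)).2 h
  · have : 0 ≤ Real.sqrt (-lam) := Real.sqrt_nonneg _
    have : (0:ℝ) < Real.pi / d := by positivity
    linarith

lemma toT_recover (lam : ℝ) : toT lam * |toT lam| = lam := by
  rw [toT]
  split_ifs with h0
  · rw [abs_of_nonneg (Real.sqrt_nonneg _), Real.mul_self_sqrt h0]
  · push_neg at h0
    rw [abs_of_nonpos (by simp [Real.sqrt_nonneg]), neg_neg, neg_mul,
      Real.mul_self_sqrt (by linarith)]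
    ring_nf

lemma toT_of_t (t : ℝ) : toT (t * |t|) = t := by
  rw [toT]
  rcases le_or_gt 0 t with h | h
  · rw [if_pos (by positivity), abs_of_nonneg h, Real.sqrt_mul_self h]
  · rw [if_neg (by nlinarith [abs_of_neg h]), abs_of_neg h, show -(t * -t) = t * t by ring]
    rw [show t * t = (-t) * (-t) by ring, Real.sqrt_mul_self (by linarith)]
    ring

/-- For every `d > 0` and every `α ∈ ℝ`, the equation `F_d^N(λ) = α` has exactly one solution
`λ ∈ (-∞, (π/d)²)`; moreover `(-∞, (π/d)²)` is disjoint from `Π_d^N`, so `F_d^N` is defined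
on all of this interval. -/
theorem stmt4 (d : ℝ) (hd : 0 < d) (α : ℝ) :
    Set.Iio ((Real.pi / d) ^ 2) ∩ PiN d = ∅ ∧
    ∃! lam : ℝ, lam < (Real.pi / d) ^ 2 ∧ FN d lam = α := by
  constructor
  · ext x
    simp only [Set.mem_inter_iff, Set.mem_Iio, Set.mem_empty_iff_false, iff_false, not_and,
      PiN, Set.mem_setOf_eq]
    rintro hx ⟨k, hk, rfl⟩
    have h1 : (1:ℝ) ≤ 2 * (k:ℝ) - 1 := by
      have : (1:ℝ) ≤ (k:ℝ) := by exact_mod_cast hk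
      linarith
    have h2 : Real.pi / d ≤ Real.pi * (2 * (k:ℝ) - 1) / d := by
      gcongr
      nlinarith [Real.pi_pos]
    have h3 : (Real.pi / d) ^ 2 ≤ (Real.pi * (2 * (k:ℝ) - 1) / d) ^ 2 :=
      pow_le_pow_left₀ (by positivity) h2 2
    linarith
  · obtain ⟨t, ht, htval⟩ := Gf_exists hd α
    refine ⟨t * |t|, ⟨?_, ?_⟩, ?_⟩
    · rcases le_or_gt t 0 with h | h
      · have h1 : t * |t| ≤ 0 := mul_nonpos_of_nonpos_of_nonneg h (abs_nonneg t)
        have h2 : (0:ℝ) < (Real.pi / d) ^ 2 := by positivity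
        linarith
      · rw [abs_of_pos h]
        calc t * t < (Real.pi / d) * (Real.pi / d) := by nlinarith
        _ = (Real.pi / d) ^ 2 := by ring
    · rw [FN_eq_Gf, toT_of_t]; exact htval
    · rintro lam ⟨hlam, hlamval⟩
      rw [FN_eq_Gf] at hlamval
      have h1 : toT lam = t := by
        apply (Gf_strictMonoOn hd).injOn (toT_lt hd hlam) ht
        rw [hlamval, htval]
      calc lam = toT lam * |toT lam| := (toT_recover lam).symm
      _ = t * |t| := by rw [h1]
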